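/- arXiv:2011.10519 — 2 statements merged into one kernel-verified Lean document; each statement's English description precedes it below -/
import Mathlib

section
/- For a Galton–Watson branching process whose offspring law has mean μ < 1 and finite second moment m₂ = E[X²] < ∞, the second moment of the total progeny satisfies E[T²] = ((1 + μ)/(1 − μ)) · Σ_{n=0}^∞ E[Z_n²], and this sum is finite. -/
/-!
Given the first `n` generations, `Z (n + 1)` is a sum of `Z n` fresh offspring counts, so Wald's
identity gives `E[Z (n+1) G] = μ E[Z n G]` for every `G` determined by those generations. Hence
`E[Z m Z (m+k)] = μ^k E[Z m ^ 2]`, and splitting `E[T²] = ∑ m, ∑ n, E[Z m Z n]` into the parts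
`n ≥ m` and `n < m` yields two geometric series with total weight `(1 + μ) / (1 - μ)`.
The sum `∑ E[Z n ^ 2]` is finite because `E[Z (n+1) ^ 2] ≤ μ² E[Z n ^ 2] + m₂ μ^n`.
-/

open MeasureTheory ProbabilityTheory
open scoped ENNReal

open Finset

namespace ENNReal

lemma tsum_mul_tsum {ι κ : Type*} (f : ι → ℝ≥0∞) (g : κ → ℝ≥0∞) :
    (∑' i, f i) * ∑' j, g j = ∑' i, ∑' j, f i * g j := by
  rw [← ENNReal.tsum_mul_right]
  exact tsum_congr fun i => ENNReal.tsum_mul_left.symm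

lemma tsum_ite_le_eq_tsum_add (a : ℕ) (g : ℕ → ℝ≥0∞) :
    ∑' n, (if a ≤ n then g n else 0) = ∑' k, g (a + k) := by
  rw [(ENNReal.summable.hasSum.sum_range_add (k := a)).tsum_eq,
    sum_eq_zero fun i hi => if_neg (not_le.2 (mem_range.1 hi)), zero_add]
  exact tsum_congr fun k => by rw [if_pos (Nat.le_add_left a k), add_comm]

lemma tsum_tsum_eq_tsum_tsum_add_tsum_tsum (f : ℕ → ℕ → ℝ≥0∞) :
    ∑' m, ∑' n, f m n = ∑' m, ∑' k, f m (m + k) + ∑' n, ∑' k, f (n + 1 + k) n := by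
  have upper : ∀ m, ∑' k, f m (m + k) = ∑' n, if m ≤ n then f m n else 0 :=
    fun m => (tsum_ite_le_eq_tsum_add m (f m)).symm
  have lower : ∀ n, ∑' k, f (n + 1 + k) n = ∑' m, if n + 1 ≤ m then f m n else 0 :=
    fun n => (tsum_ite_le_eq_tsum_add (n + 1) (f · n)).symm
  rw [tsum_congr upper, tsum_congr lower,
    ENNReal.tsum_comm (f := fun n m => if n + 1 ≤ m then f m n else 0), ← ENNReal.tsum_add]
  refine tsum_congr fun m => ?_
  rw [← ENNReal.tsum_add]
  refine tsum_congr fun n => ?_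
  split_ifs <;> first | omega | simp

lemma tsum_tsum_eq_mul_tsum_of_geometric {c : ℕ → ℕ → ℝ≥0∞} {e : ℕ → ℝ≥0∞} {q : ℝ≥0∞}
    (hsymm : ∀ m n, c m n = c n m) (hc : ∀ m k, c m (m + k) = q ^ k * e m) :
    ∑' m, ∑' n, c m n = (1 + q) * (1 - q)⁻¹ * ∑' m, e m := by
  have hlow : ∀ n k, c (n + 1 + k) n = q ^ (k + 1) * e n := fun n k => by
    rw [hsymm, add_assoc, hc, add_comm]
  simp only [tsum_tsum_eq_tsum_tsum_add_tsum_tsum, hc, hlow, ENNReal.tsum_mul_right,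
    ENNReal.tsum_geometric, ENNReal.tsum_geometric_add_one, ENNReal.tsum_mul_left]
  ring

lemma sum_range_le_of_le_mul_add {e b : ℕ → ℝ≥0∞} {q : ℝ≥0∞} (hq : q < 1)
    (hrec : ∀ n, e (n + 1) ≤ q * e n + b n) (N : ℕ) :
    ∑ n ∈ range N, e n ≤ (e 0 + ∑' n, b n) * (1 - q)⁻¹ := by
  have hC : e 0 + ∑' n, b n + q * ((e 0 + ∑' n, b n) * (1 - q)⁻¹)
      = (e 0 + ∑' n, b n) * (1 - q)⁻¹ := by
    have h1q : (1 - q) * (1 - q)⁻¹ = 1 :=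
      ENNReal.mul_inv_cancel (tsub_pos_of_lt hq).ne' (by simp)
    calc _ = (e 0 + ∑' n, b n) * (((1 - q) + q) * (1 - q)⁻¹) := by
          rw [add_mul (1 - q) q, h1q]; ring
      _ = _ := by rw [tsub_add_cancel_of_le hq.le, one_mul]
  set C := (e 0 + ∑' n, b n) * (1 - q)⁻¹
  induction N with
  | zero => simp
  | succ N ih =>
    calc ∑ n ∈ range (N + 1), e n = e 0 + ∑ n ∈ range N, e (n + 1) := by
          rw [sum_range_succ', add_comm]
      _ ≤ e 0 + ∑ n ∈ range N, (q * e n + b n) := by gcongr with n; exact hrec n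
      _ = e 0 + (q * ∑ n ∈ range N, e n + ∑ n ∈ range N, b n) := by
          rw [sum_add_distrib, mul_sum]
      _ ≤ e 0 + (q * C + ∑' n, b n) := by
          gcongr
          exact ENNReal.sum_le_tsum _
      _ = C := (by ring : _ = e 0 + ∑' n, b n + q * C).trans hC

lemma tsum_ne_top_of_le_mul_add {e b : ℕ → ℝ≥0∞} {q : ℝ≥0∞} (hq : q < 1)
    (he0 : e 0 ≠ ⊤) (hb : ∑' n, b n ≠ ⊤) (hrec : ∀ n, e (n + 1) ≤ q * e n + b n) :
    ∑' n, e n ≠ ⊤ := by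
  refine ne_top_of_le_ne_top ?_
    (ENNReal.tsum_le_of_sum_range_le (sum_range_le_of_le_mul_add hq hrec))
  exact ENNReal.mul_ne_top (ENNReal.add_ne_top.2 ⟨he0, hb⟩)
    (ENNReal.inv_ne_top.2 (tsub_pos_of_lt hq).ne')

end ENNReal

lemma Finset.sum_eq_tsum_mul_ite {ι : Type*} [DecidableEq ι] (s : Finset ι) (y : ι → ℝ≥0∞) :
    ∑ i ∈ s, y i = ∑' i, y i * (if i ∈ s then 1 else 0) := by
  rw [tsum_eq_sum (s := s) (fun i hi => by simp [hi])]
  exact sum_congr rfl fun i hi => by simp [hi]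

lemma Finset.tsum_ite_mem_one_eq_card {ι : Type*} [DecidableEq ι] (s : Finset ι) :
    ∑' i, (if i ∈ s then (1 : ℝ≥0∞) else 0) = #s := by
  simpa using (s.sum_eq_tsum_mul_ite fun _ => 1).symm

lemma MeasureTheory.lintegral_tsum_tsum {α ι κ : Type*} [MeasurableSpace α] {μ : Measure α}
    [Countable ι] [Countable κ] {f : ι → κ → α → ℝ≥0∞} (hf : ∀ i j, AEMeasurable (f i j) μ) :
    ∫⁻ x, ∑' i, ∑' j, f i j x ∂μ = ∑' i, ∑' j, ∫⁻ x, f i j x ∂μ := by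
  rw [lintegral_tsum fun i => AEMeasurable.tsum fun j => hf i j]
  exact tsum_congr fun i => lintegral_tsum (hf i)

section RandomSum

variable {Ω : Type*} {𝓕 𝓖 mΩ : MeasurableSpace Ω} {P : Measure Ω}
  {Y : ℕ → Ω → ℝ≥0∞} {N : Ω → ℕ} {a : ℝ≥0∞}

lemma measurable_sum_Icc {m : MeasurableSpace Ω} {f : ℕ → Ω → ℕ} (hN : Measurable[m] N)
    (hf : ∀ i, Measurable[m] (f i)) : Measurable[m] fun ω => ∑ i ∈ Icc 1 (N ω), f i ω :=
  (measurable_from_prod_countable_left (f := fun p : Ω × ℕ => ∑ i ∈ Icc 1 p.2, f i p.1)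
    fun n => by simpa using Finset.measurable_sum (Icc 1 n) fun i _ => hf i).comp
    (measurable_id.prodMk hN)

lemma measurable_ite_mem_Icc (hN : Measurable[𝓖] N) (i : ℕ) :
    Measurable[𝓖] fun ω => if i ∈ Icc 1 (N ω) then (1 : ℝ≥0∞) else 0 :=
  Measurable.ite (show MeasurableSet[𝓖] (N ⁻¹' {n | i ∈ Icc 1 n}) from hN .of_discrete)
    measurable_const measurable_const

lemma lintegral_sum_Icc_mul_of_indep (h𝓕 : 𝓕 ≤ mΩ) (h𝓖 : 𝓖 ≤ mΩ) (hind : Indep 𝓕 𝓖 P)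
    (hY : ∀ i, Measurable[𝓕] (Y i)) (hmean : ∀ i, ∫⁻ ω, Y i ω ∂P = a)
    (hN : Measurable[𝓖] N) {G : Ω → ℝ≥0∞} (hG : Measurable[𝓖] G) :
    ∫⁻ ω, (∑ i ∈ Icc 1 (N ω), Y i ω) * G ω ∂P = a * ∫⁻ ω, N ω * G ω ∂P := by
  set I : ℕ → Ω → ℝ≥0∞ := fun i ω => if i ∈ Icc 1 (N ω) then 1 else 0
  have hIG : ∀ i, Measurable[𝓖] fun ω => I i ω * G ω :=
    fun i => (measurable_ite_mem_Icc hN i).mul hG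
  calc ∫⁻ ω, (∑ i ∈ Icc 1 (N ω), Y i ω) * G ω ∂P
      = ∫⁻ ω, ∑' i, Y i ω * (I i ω * G ω) ∂P := lintegral_congr fun ω => by
        simp only [sum_eq_tsum_mul_ite, ← ENNReal.tsum_mul_right, mul_assoc, I]
    _ = ∑' i, ∫⁻ ω, Y i ω * (I i ω * G ω) ∂P :=
        lintegral_tsum fun i => (((hY i).mono h𝓕 le_rfl).mul ((hIG i).mono h𝓖 le_rfl)).aemeasurable
    _ = ∑' i, a * ∫⁻ ω, I i ω * G ω ∂P := tsum_congr fun i =>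
        (lintegral_mul_eq_lintegral_mul_lintegral_of_independent_measurableSpace
          h𝓕 h𝓖 hind (hY i) (hIG i)).trans (by rw [hmean])
    _ = a * ∫⁻ ω, N ω * G ω ∂P := by
        rw [ENNReal.tsum_mul_left, ← lintegral_tsum fun i => ((hIG i).mono h𝓖 le_rfl).aemeasurable]
        congr 1
        refine lintegral_congr fun ω => ?_
        simp only [ENNReal.tsum_mul_right, I, tsum_ite_mem_one_eq_card, Nat.card_Icc,
          add_tsub_cancel_right]

lemma lintegral_mul_le_of_indepFun (hY : ∀ i, AEMeasurable (Y i) P)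
    (hmean : ∀ i, ∫⁻ ω, Y i ω ∂P = a) (hpair : ∀ i j, i ≠ j → IndepFun (Y i) (Y j) P)
    {s : ℝ≥0∞} (hsq : ∀ i, ∫⁻ ω, Y i ω ^ 2 ∂P = s) (i j : ℕ) :
    ∫⁻ ω, Y i ω * Y j ω ∂P ≤ a ^ 2 + if i = j then s else 0 := by
  rcases eq_or_ne i j with rfl | hij
  · simp [← pow_two, hsq]
  · rw [lintegral_mul_eq_lintegral_mul_lintegral_of_indepFun'' (hY i) (hY j) (hpair i j hij),
      hmean, hmean, if_neg hij, add_zero, pow_two]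

lemma lintegral_sum_Icc_sq_le_of_indep (h𝓕 : 𝓕 ≤ mΩ) (h𝓖 : 𝓖 ≤ mΩ) (hind : Indep 𝓕 𝓖 P)
    (hY : ∀ i, Measurable[𝓕] (Y i)) (hmean : ∀ i, ∫⁻ ω, Y i ω ∂P = a)
    (hpair : ∀ i j, i ≠ j → IndepFun (Y i) (Y j) P) {s : ℝ≥0∞}
    (hsq : ∀ i, ∫⁻ ω, Y i ω ^ 2 ∂P = s) (hN : Measurable[𝓖] N) :
    ∫⁻ ω, (∑ i ∈ Icc 1 (N ω), Y i ω) ^ 2 ∂P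
      ≤ a ^ 2 * ∫⁻ ω, (N ω : ℝ≥0∞) ^ 2 ∂P + s * ∫⁻ ω, (N ω : ℝ≥0∞) ∂P := by
  set I : ℕ → Ω → ℝ≥0∞ := fun i ω => if i ∈ Icc 1 (N ω) then 1 else 0
  have hI : ∀ i, Measurable[𝓖] (I i) := measurable_ite_mem_Icc hN
  have hII : ∀ i j, Measurable[𝓖] fun ω => I i ω * I j ω := fun i j => (hI i).mul (hI j)
  have hYY : ∀ i j, Measurable[𝓕] fun ω => Y i ω * Y j ω := fun i j => (hY i).mul (hY j)
  have hN_tsum : ∀ ω, (N ω : ℝ≥0∞) = ∑' i, I i ω := fun ω => by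
    simp only [I, tsum_ite_mem_one_eq_card, Nat.card_Icc, add_tsub_cancel_right]
  have hdiag : ∀ i, ∑' j, (if i = j then s else 0) * ∫⁻ ω, I i ω * I j ω ∂P
      = s * ∫⁻ ω, I i ω ∂P := fun i => by
    rw [tsum_eq_single i fun j hj => by simp [Ne.symm hj], if_pos rfl]
    congr 1
    exact lintegral_congr fun ω => by simp [I]
  calc ∫⁻ ω, (∑ i ∈ Icc 1 (N ω), Y i ω) ^ 2 ∂P
      = ∫⁻ ω, ∑' i, ∑' j, (Y i ω * Y j ω) * (I i ω * I j ω) ∂P := lintegral_congr fun ω => by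
        rw [sum_eq_tsum_mul_ite, pow_two, ENNReal.tsum_mul_tsum]
        exact tsum_congr fun i => tsum_congr fun j => by ring
    _ = ∑' i, ∑' j, (∫⁻ ω, Y i ω * Y j ω ∂P) * ∫⁻ ω, I i ω * I j ω ∂P := by
        rw [lintegral_tsum_tsum fun i j =>
          (((hYY i j).mono h𝓕 le_rfl).fun_mul ((hII i j).mono h𝓖 le_rfl)).aemeasurable]
        exact tsum_congr fun i => tsum_congr fun j =>
          lintegral_mul_eq_lintegral_mul_lintegral_of_independent_measurableSpace
            h𝓕 h𝓖 hind (hYY i j) (hII i j)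
    _ ≤ ∑' i, ∑' j, (a ^ 2 + if i = j then s else 0) * ∫⁻ ω, I i ω * I j ω ∂P := by
        gcongr with i j
        exact lintegral_mul_le_of_indepFun (fun i => ((hY i).mono h𝓕 le_rfl).aemeasurable)
          hmean hpair hsq i j
    _ = a ^ 2 * ∑' i, ∑' j, ∫⁻ ω, I i ω * I j ω ∂P + s * ∑' i, ∫⁻ ω, I i ω ∂P := by
        simp only [add_mul, ENNReal.tsum_add, ENNReal.tsum_mul_left, hdiag]
    _ = a ^ 2 * ∫⁻ ω, (N ω : ℝ≥0∞) ^ 2 ∂P + s * ∫⁻ ω, (N ω : ℝ≥0∞) ∂P := by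
        simp only [hN_tsum, pow_two, ENNReal.tsum_mul_tsum]
        rw [lintegral_tsum_tsum fun i j => ((hII i j).mono h𝓖 le_rfl).aemeasurable,
          lintegral_tsum fun i => ((hI i).mono h𝓖 le_rfl).aemeasurable]

end RandomSum

namespace GaltonWatson

variable {Ω : Type*}

abbrev offspringSigma (X : ℕ → ℕ → Ω → ℕ) (s : Set (ℕ × ℕ)) : MeasurableSpace Ω :=
  ⨆ p ∈ s, MeasurableSpace.comap (X p.1 p.2) inferInstance

variable {X : ℕ → ℕ → Ω → ℕ} {Z : ℕ → Ω → ℕ}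

lemma offspringSigma_le [mΩ : MeasurableSpace Ω] (hX : ∀ n i, Measurable (X n i))
    (s : Set (ℕ × ℕ)) : offspringSigma X s ≤ mΩ :=
  iSup₂_le fun p _ => (hX p.1 p.2).comap_le

lemma measurable_offspringSigma {s : Set (ℕ × ℕ)} {p : ℕ × ℕ} (hp : p ∈ s) :
    Measurable[offspringSigma X s] (X p.1 p.2) :=
  (comap_measurable _).mono
    (le_biSup (fun p => MeasurableSpace.comap (X p.1 p.2) inferInstance) hp) le_rfl

lemma indep_offspringSigma_compl [MeasurableSpace Ω] {P : Measure Ω}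
    (hX : ∀ n i, Measurable (X n i)) (hindep : iIndepFun (fun p : ℕ × ℕ => X p.1 p.2) P)
    (s : Set (ℕ × ℕ)) : Indep (offspringSigma X sᶜ) (offspringSigma X s) P := by
  have h := indep_biSup_compl
    (s := fun p : ℕ × ℕ => MeasurableSpace.comap (X p.1 p.2) inferInstance)
    (fun p => (hX p.1 p.2).comap_le) hindep.iIndep s
  exact h.symm

lemma measurable_generation_of_le (hZ0 : ∀ ω, Z 0 ω = 1)
    (hZrec : ∀ n ω, Z (n + 1) ω = ∑ i ∈ Icc 1 (Z n ω), X (n + 1) i ω) {m n : ℕ} (hmn : m ≤ n) :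
    Measurable[offspringSigma X {p | p.1 ≤ n}] (Z m) := by
  induction m with
  | zero => simp only [funext hZ0]; exact measurable_const
  | succ m ih =>
    rw [funext (hZrec m)]
    exact measurable_sum_Icc (ih (by omega)) fun i =>
      measurable_offspringSigma (p := (m + 1, i)) hmn

variable [MeasurableSpace Ω] {P : Measure Ω} {a : ℝ≥0∞}

lemma lintegral_generation_succ_mul (hX : ∀ n i, Measurable (X n i))
    (hindep : iIndepFun (fun p : ℕ × ℕ => X p.1 p.2) P) (hZ0 : ∀ ω, Z 0 ω = 1)
    (hZrec : ∀ n ω, Z (n + 1) ω = ∑ i ∈ Icc 1 (Z n ω), X (n + 1) i ω)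
    (hmean : ∀ n i, ∫⁻ ω, (X n i ω : ℝ≥0∞) ∂P = a) {n : ℕ} {G : Ω → ℝ≥0∞}
    (hG : Measurable[offspringSigma X {p | p.1 ≤ n}] G) :
    ∫⁻ ω, Z (n + 1) ω * G ω ∂P = a * ∫⁻ ω, Z n ω * G ω ∂P := by
  simp only [hZrec n, Nat.cast_sum]
  exact lintegral_sum_Icc_mul_of_indep (offspringSigma_le hX _) (offspringSigma_le hX _)
    (indep_offspringSigma_compl hX hindep _)
    (fun i => measurable_from_top.comp (measurable_offspringSigma (p := (n + 1, i)) (by simp)))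
    (fun i => hmean _ i) (measurable_generation_of_le hZ0 hZrec le_rfl) hG

lemma lintegral_generation_succ_sq_le (hX : ∀ n i, Measurable (X n i))
    (hindep : iIndepFun (fun p : ℕ × ℕ => X p.1 p.2) P) (hZ0 : ∀ ω, Z 0 ω = 1)
    (hZrec : ∀ n ω, Z (n + 1) ω = ∑ i ∈ Icc 1 (Z n ω), X (n + 1) i ω)
    (hmean : ∀ n i, ∫⁻ ω, (X n i ω : ℝ≥0∞) ∂P = a) {s : ℝ≥0∞}
    (hsq : ∀ n i, ∫⁻ ω, (X n i ω : ℝ≥0∞) ^ 2 ∂P = s) (n : ℕ) :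
    ∫⁻ ω, (Z (n + 1) ω : ℝ≥0∞) ^ 2 ∂P
      ≤ a ^ 2 * ∫⁻ ω, (Z n ω : ℝ≥0∞) ^ 2 ∂P + s * ∫⁻ ω, (Z n ω : ℝ≥0∞) ∂P := by
  simp only [hZrec n, Nat.cast_sum]
  refine lintegral_sum_Icc_sq_le_of_indep (offspringSigma_le hX _) (offspringSigma_le hX _)
    (indep_offspringSigma_compl hX hindep _)
    (fun i => measurable_from_top.comp (measurable_offspringSigma (p := (n + 1, i)) (by simp)))
    (fun i => hmean _ i) (fun i j hij => ?_) (fun i => hsq _ i)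
    (measurable_generation_of_le hZ0 hZrec le_rfl)
  exact (hindep.indepFun (i := (n + 1, i)) (j := (n + 1, j)) (by simpa using hij)).comp
    measurable_from_top measurable_from_top

lemma lintegral_generation_mul_generation_add (hX : ∀ n i, Measurable (X n i))
    (hindep : iIndepFun (fun p : ℕ × ℕ => X p.1 p.2) P) (hZ0 : ∀ ω, Z 0 ω = 1)
    (hZrec : ∀ n ω, Z (n + 1) ω = ∑ i ∈ Icc 1 (Z n ω), X (n + 1) i ω)
    (hmean : ∀ n i, ∫⁻ ω, (X n i ω : ℝ≥0∞) ∂P = a) (m k : ℕ) :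
    ∫⁻ ω, (Z m ω : ℝ≥0∞) * Z (m + k) ω ∂P = a ^ k * ∫⁻ ω, (Z m ω : ℝ≥0∞) ^ 2 ∂P := by
  induction k with
  | zero => simp [pow_two]
  | succ k ih =>
    have hZm : Measurable[offspringSigma X {p | p.1 ≤ m + k}] fun ω => (Z m ω : ℝ≥0∞) :=
      measurable_from_top.comp (measurable_generation_of_le hZ0 hZrec (Nat.le_add_right m k))
    simp_rw [mul_comm (Z m _ : ℝ≥0∞)] at ih ⊢
    rw [← add_assoc, lintegral_generation_succ_mul hX hindep hZ0 hZrec hmean hZm, ih, pow_succ']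
    ring

lemma lintegral_generation [IsProbabilityMeasure P] (hX : ∀ n i, Measurable (X n i))
    (hindep : iIndepFun (fun p : ℕ × ℕ => X p.1 p.2) P) (hZ0 : ∀ ω, Z 0 ω = 1)
    (hZrec : ∀ n ω, Z (n + 1) ω = ∑ i ∈ Icc 1 (Z n ω), X (n + 1) i ω)
    (hmean : ∀ n i, ∫⁻ ω, (X n i ω : ℝ≥0∞) ∂P = a) (n : ℕ) :
    ∫⁻ ω, (Z n ω : ℝ≥0∞) ∂P = a ^ n := by
  simpa [hZ0] using lintegral_generation_mul_generation_add hX hindep hZ0 hZrec hmean 0 n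

lemma tsum_lintegral_generation_sq_ne_top [IsProbabilityMeasure P]
    (hX : ∀ n i, Measurable (X n i)) (hindep : iIndepFun (fun p : ℕ × ℕ => X p.1 p.2) P)
    (hZ0 : ∀ ω, Z 0 ω = 1) (hZrec : ∀ n ω, Z (n + 1) ω = ∑ i ∈ Icc 1 (Z n ω), X (n + 1) i ω)
    (hmean : ∀ n i, ∫⁻ ω, (X n i ω : ℝ≥0∞) ∂P = a) {s : ℝ≥0∞}
    (hsq : ∀ n i, ∫⁻ ω, (X n i ω : ℝ≥0∞) ^ 2 ∂P = s) (ha : a < 1) (hs : s ≠ ⊤) :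
    ∑' n, ∫⁻ ω, (Z n ω : ℝ≥0∞) ^ 2 ∂P ≠ ⊤ := by
  refine ENNReal.tsum_ne_top_of_le_mul_add (q := a ^ 2) (b := fun n => s * a ^ n)
    (pow_lt_one₀ zero_le ha two_ne_zero) (by simp [hZ0]) ?_ fun n => ?_
  · rw [ENNReal.tsum_mul_left, ENNReal.tsum_geometric]
    exact ENNReal.mul_ne_top hs (ENNReal.inv_ne_top.2 (tsub_pos_of_lt ha).ne')
  · rw [← lintegral_generation hX hindep hZ0 hZrec hmean n]
    exact lintegral_generation_succ_sq_le hX hindep hZ0 hZrec hmean hsq n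

end GaltonWatson

theorem second_moment_total_progeny_via_generations_general
    {Ω : Type*} [MeasurableSpace Ω] (P : Measure Ω) [IsProbabilityMeasure P]
    (X : ℕ → ℕ → Ω → ℕ)
    (hXmeas : ∀ n i, Measurable (X n i))
    (hXindep : iIndepFun (fun p : ℕ × ℕ => X p.1 p.2) P)
    (hXident : ∀ n i, IdentDistrib (X n i) (X 1 1) P P)
    (Z : ℕ → Ω → ℕ)
    (hZ0 : ∀ ω, Z 0 ω = 1)
    (hZrec : ∀ n ω, Z (n + 1) ω = ∑ i ∈ Finset.Icc 1 (Z n ω), X (n + 1) i ω)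
    (μ m₂ : ℝ) (hμ0 : 0 ≤ μ)
    (hμ : ∫⁻ ω, (X 1 1 ω : ℝ≥0∞) ∂P = ENNReal.ofReal μ)
    (hm₂ : ∫⁻ ω, (X 1 1 ω : ℝ≥0∞) ^ 2 ∂P = ENNReal.ofReal m₂)
    (hμ1 : μ < 1) :
    (∑' n, ∫⁻ ω, ((Z n ω : ℝ≥0∞)) ^ 2 ∂P) ≠ ⊤ ∧
    ∫⁻ ω, (∑' n, (Z n ω : ℝ≥0∞)) ^ 2 ∂P
      = ENNReal.ofReal ((1 + μ) / (1 - μ)) * ∑' n, ∫⁻ ω, ((Z n ω : ℝ≥0∞)) ^ 2 ∂P := by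
  have hmean : ∀ n i, ∫⁻ ω, (X n i ω : ℝ≥0∞) ∂P = ENNReal.ofReal μ := fun n i =>
    ((hXident n i).comp measurable_from_top).lintegral_eq.trans hμ
  have hsq : ∀ n i, ∫⁻ ω, (X n i ω : ℝ≥0∞) ^ 2 ∂P = ENNReal.ofReal m₂ := fun n i =>
    ((hXident n i).comp
      (measurable_from_top (f := fun k : ℕ => (k : ℝ≥0∞) ^ 2))).lintegral_eq.trans hm₂
  have hZmeas : ∀ n, Measurable fun ω => (Z n ω : ℝ≥0∞) := fun n =>
    measurable_from_top.comp ((GaltonWatson.measurable_generation_of_le hZ0 hZrec le_rfl).mono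
      (GaltonWatson.offspringSigma_le hXmeas _) le_rfl)
  have hfactor : ENNReal.ofReal ((1 + μ) / (1 - μ))
      = (1 + ENNReal.ofReal μ) * (1 - ENNReal.ofReal μ)⁻¹ := by
    rw [ENNReal.ofReal_div_of_pos (by linarith), ENNReal.ofReal_add zero_le_one hμ0,
      ENNReal.ofReal_sub _ hμ0, ENNReal.ofReal_one, div_eq_mul_inv]
  refine ⟨GaltonWatson.tsum_lintegral_generation_sq_ne_top hXmeas hXindep hZ0 hZrec hmean hsq
    (ENNReal.ofReal_lt_one.2 hμ1) ENNReal.ofReal_ne_top, ?_⟩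
  calc ∫⁻ ω, (∑' n, (Z n ω : ℝ≥0∞)) ^ 2 ∂P
      = ∑' m, ∑' n, ∫⁻ ω, (Z m ω : ℝ≥0∞) * Z n ω ∂P := by
        simp only [pow_two, ENNReal.tsum_mul_tsum]
        exact lintegral_tsum_tsum fun m n => ((hZmeas m).mul (hZmeas n)).aemeasurable
    _ = _ := by
        rw [hfactor]
        exact ENNReal.tsum_tsum_eq_mul_tsum_of_geometric
          (fun m n => lintegral_congr fun ω => mul_comm _ _)
          (GaltonWatson.lintegral_generation_mul_generation_add hXmeas hXindep hZ0 hZrec hmean)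

/-- **Second moment of the total progeny via second moments of generations.**
For a Galton–Watson branching process whose offspring law has mean `μ < 1` and finite
second moment `m₂ = E[X²] < ∞`, the second moment of the total progeny satisfies
`E[T²] = ((1 + μ)/(1 − μ)) · ∑ₙ E[Zₙ²]`, and this sum is finite. -/
theorem second_moment_total_progeny_via_generations
    {Ω : Type*} [MeasurableSpace Ω] (P : Measure Ω) [IsProbabilityMeasure P]
    (X : ℕ → ℕ → Ω → ℕ)
    (hXmeas : ∀ n i, Measurable (X n i))
    (hXindep : iIndepFun (fun p : ℕ × ℕ => X p.1 p.2) P)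
    (hXident : ∀ n i, IdentDistrib (X n i) (X 1 1) P P)
    (Z : ℕ → Ω → ℕ)
    (hZ0 : ∀ ω, Z 0 ω = 1)
    (hZrec : ∀ n ω, Z (n + 1) ω = ∑ i ∈ Finset.Icc 1 (Z n ω), X (n + 1) i ω)
    (μ m₂ : ℝ) (hμ0 : 0 ≤ μ) (hm₂0 : 0 ≤ m₂)
    (hμ : ∫⁻ ω, (X 1 1 ω : ℝ≥0∞) ∂P = ENNReal.ofReal μ)
    (hm₂ : ∫⁻ ω, (X 1 1 ω : ℝ≥0∞) ^ 2 ∂P = ENNReal.ofReal m₂)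
    (hμ1 : μ < 1) :
    (∑' n, ∫⁻ ω, ((Z n ω : ℝ≥0∞)) ^ 2 ∂P) ≠ ⊤ ∧
    ∫⁻ ω, (∑' n, (Z n ω : ℝ≥0∞)) ^ 2 ∂P
      = ENNReal.ofReal ((1 + μ) / (1 - μ)) * ∑' n, ∫⁻ ω, ((Z n ω : ℝ≥0∞)) ^ 2 ∂P :=
  second_moment_total_progeny_via_generations_general P X hXmeas hXindep hXident Z hZ0 hZrec μ m₂
    hμ0 hμ hm₂ hμ1
end

section
/- Let δ > 0 and let N be a random variable taking values in {1, 2, …} with P(N ≥ 2) > 0 (equivalently, E[N^{−m}] < 1 for every integer m ≥ 1). Let (R_n)_{n≥0} be nonnegative random variables with R_0 = 0 and R_n ≤ R_{n+1} almost surely for all n, increasing almost surely to a limit R_∞. Suppose that for every n ≥ 1, R_n is stochastically dominated by (δN)^{-1} + N^{-2} Σ_{i=1}^{N} R_{n−1}^{(i)}, where R_{n−1}^{(1)}, R_{n−1}^{(2)}, … are i.i.d. copies of R_{n−1} that are independent of N (stochastic domination meaning P(R_n > t) ≤ P((δN)^{-1} + N^{-2} Σ_{i=1}^{N} R_{n−1}^{(i)}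 > t) for all t ≥ 0). Then E[R_∞^m] < ∞ for every integer m ≥ 1; moreover, for each m ≥ 1, sup_n E[R_n^m] ≤ ( Σ_{k=0}^{m−1} binom(m,k) δ^{k−m} E[N^{−m}] E[R_∞^k] ) / (1 − E[N^{−m}]). -/
/-!
By the layer-cake formula, stochastic domination of nonnegative variables passes to their
`m`-th moments. Expanding `((δN)⁻¹ + N⁻² ∑ Rₙ⁽ⁱ⁾)^m` binomially and applying Jensen to
`(N⁻¹ ∑ Rₙ⁽ⁱ⁾)^k`, Wald's identity (`N` is independent of the copies) gives
`E[R_{n+1}^m] ≤ b + E[N^{-m}] E[Rₙ^m]`, where `b` involves only the moments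
`E[Rₙ^k] ≤ E[R_∞^k]` with `k < m`. As `E[N^{-m}] < 1`, iterating from `R₀ = 0` bounds
`E[Rₙ^m]` by `b / (1 - E[N^{-m}])`, and Fatou's lemma passes the bound to `R_∞`. Strong
induction on `m` makes `b` finite.
-/

open MeasureTheory ProbabilityTheory Filter Finset
open scoped ENNReal Topology

namespace ENNReal

theorem le_div_of_le_add_mul {a : ℕ → ℝ≥0∞} {b q : ℝ≥0∞} (hq : q < 1) (h0 : a 0 = 0)
    (h : ∀ n, a (n + 1) ≤ b + q * a n) : ∀ n, a n ≤ b / (1 - q)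
  | 0 => h0 ▸ zero_le
  | n + 1 => by
    have h1q : 1 - q ≠ 0 := (tsub_pos_of_lt hq).ne'
    calc a (n + 1) ≤ b + q * (b / (1 - q)) := by grw [h n, le_div_of_le_add_mul hq h0 h n]
      _ = b / (1 - q) * ((1 - q) + q) := by
        rw [mul_add, ENNReal.div_mul_cancel h1q (by simp), mul_comm]
      _ = b / (1 - q) := by rw [tsub_add_cancel_of_le hq.le, mul_one]

theorem sum_ofReal_mul_le_ofReal_sum {ι : Type*} {s : Finset ι} {x z : ι → ℝ} {y : ι → ℝ≥0∞}
    (hx : ∀ i ∈ s, 0 ≤ x i) (hz : ∀ i ∈ s, 0 ≤ z i) (hy : ∀ i ∈ s, y i ≤ ENNReal.ofReal (z i)) :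
    ∑ i ∈ s, ENNReal.ofReal (x i) * y i ≤ ENNReal.ofReal (∑ i ∈ s, x i * z i) := by
  rw [ENNReal.ofReal_sum_of_nonneg fun i hi => mul_nonneg (hx i hi) (hz i hi)]
  refine sum_le_sum fun i hi => ?_
  rw [ENNReal.ofReal_mul (hx i hi)]
  gcongr
  exact hy i hi

end ENNReal

noncomputable def resistanceMap (δ : ℝ) (j : ℕ) (x : ℕ → ℝ) : ℝ :=
  (δ * (j : ℝ))⁻¹ + ((j : ℝ) ^ 2)⁻¹ * ∑ i ∈ Icc 1 j, x i

theorem resistanceMap_nonneg {δ : ℝ} (hδ : 0 ≤ δ) {j : ℕ} {x : ℕ → ℝ}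
    (hx : ∀ i ∈ Icc 1 j, 0 ≤ x i) : 0 ≤ resistanceMap δ j x :=
  add_nonneg (by positivity) (mul_nonneg (by positivity) (sum_nonneg hx))

theorem resistanceMap_pow_le {δ : ℝ} (hδ : 0 < δ) {j : ℕ} (hj : 1 ≤ j) {x : ℕ → ℝ}
    (hx : ∀ i ∈ Icc 1 j, 0 ≤ x i) (m : ℕ) :
    resistanceMap δ j x ^ m ≤ ∑ k ∈ range (m + 1), (m.choose k : ℝ) * δ ^ ((k : ℤ) - m)
      * (((j : ℝ) ^ (m + 1))⁻¹ * ∑ i ∈ Icc 1 j, x i ^ k) := by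
  have hj0 : (0 : ℝ) < j := by exact_mod_cast hj
  have jensen : ∀ k : ℕ, ((j : ℝ)⁻¹ * ∑ i ∈ Icc 1 j, x i) ^ k
      ≤ (j : ℝ)⁻¹ * ∑ i ∈ Icc 1 j, x i ^ k := fun k => by
    simpa only [mul_sum] using Real.pow_arith_mean_le_arith_mean_pow (Icc 1 j)
      (fun _ => (j : ℝ)⁻¹) x (fun _ _ => by positivity) (by simp [hj0.ne']) hx k
  rw [resistanceMap, add_comm, add_pow]
  refine sum_le_sum fun k hk => ?_
  obtain ⟨p, rfl⟩ : ∃ p, m = k + p :=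
    Nat.exists_eq_add_of_le (Nat.lt_succ_iff.1 (mem_range.1 hk))
  have hsplit : ((j : ℝ) ^ 2)⁻¹ * ∑ i ∈ Icc 1 j, x i
      = (j : ℝ)⁻¹ * ((j : ℝ)⁻¹ * ∑ i ∈ Icc 1 j, x i) := by ring
  have hδp : δ ^ ((k : ℤ) - ↑(k + p)) = (δ ^ p)⁻¹ := by
    rw [Nat.cast_add, sub_add_cancel_left, zpow_neg, zpow_natCast]
  rw [hsplit, mul_pow, Nat.add_sub_cancel_left, hδp]
  calc (j : ℝ)⁻¹ ^ k * ((j : ℝ)⁻¹ * ∑ i ∈ Icc 1 j, x i) ^ k * (δ * j)⁻¹ ^ p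
        * ((k + p).choose k)
      ≤ (j : ℝ)⁻¹ ^ k * ((j : ℝ)⁻¹ * ∑ i ∈ Icc 1 j, x i ^ k) * (δ * j)⁻¹ ^ p
        * ((k + p).choose k) := by
        gcongr
        exact jensen k
    _ = _ := by
        simp only [inv_pow, mul_inv, mul_pow]
        field_simp
        ring

section

variable {Ω : Type*} [MeasurableSpace Ω]

def StochDominated (μ : Measure Ω) (X Y : Ω → ℝ) : Prop :=
  ∀ t : ℝ, 0 ≤ t → μ {ω | t < X ω} ≤ μ {ω | t < Y ω}

variable {μ : Measure Ω}

namespace StochDominated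

variable {X Y : Ω → ℝ}

theorem pow (h : StochDominated μ X Y) (hX : 0 ≤ᵐ[μ] X) (hY : 0 ≤ᵐ[μ] Y) {m : ℕ} (hm : m ≠ 0) :
    StochDominated μ (fun ω => X ω ^ m) (fun ω => Y ω ^ m) := by
  have hm' : (0 : ℝ) < m := by positivity
  have root : ∀ Z : Ω → ℝ, 0 ≤ᵐ[μ] Z → ∀ t : ℝ, 0 ≤ t →
      μ {ω | t < Z ω ^ m} = μ {ω | t ^ (m : ℝ)⁻¹ < Z ω} := fun Z hZ t ht =>
    measure_congr <| hZ.mono fun ω (hω : 0 ≤ Z ω) => propext <|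
      show t < Z ω ^ m ↔ t ^ (m : ℝ)⁻¹ < Z ω by
        rw [Real.rpow_inv_lt_iff_of_pos ht hω hm', Real.rpow_natCast]
  intro t ht
  rw [root X hX t ht, root Y hY t ht]
  exact h _ (by positivity)

theorem lintegral_ofReal_le (h : StochDominated μ X Y) (hXm : AEMeasurable X μ)
    (hYm : AEMeasurable Y μ) (hX : 0 ≤ᵐ[μ] X) (hY : 0 ≤ᵐ[μ] Y) :
    ∫⁻ ω, ENNReal.ofReal (X ω) ∂μ ≤ ∫⁻ ω, ENNReal.ofReal (Y ω) ∂μ := by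
  rw [lintegral_eq_lintegral_meas_lt μ hX hXm, lintegral_eq_lintegral_meas_lt μ hY hYm]
  exact setLIntegral_mono' measurableSet_Ioi fun t ht => h t (le_of_lt ht)

theorem lintegral_ofReal_pow_le (h : StochDominated μ X Y) (hXm : AEMeasurable X μ)
    (hYm : AEMeasurable Y μ) (hX : 0 ≤ᵐ[μ] X) (hY : 0 ≤ᵐ[μ] Y) (m : ℕ) :
    ∫⁻ ω, ENNReal.ofReal (X ω ^ m) ∂μ ≤ ∫⁻ ω, ENNReal.ofReal (Y ω ^ m) ∂μ := by
  rcases eq_or_ne m 0 with rfl | hm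
  · simp
  exact (h.pow hX hY hm).lintegral_ofReal_le (hXm.pow_const m) (hYm.pow_const m)
    (hX.mono fun ω h => pow_nonneg h m) (hY.mono fun ω h => pow_nonneg h m)

end StochDominated

theorem measurable_apply_random_index {β : Type*} [MeasurableSpace β] {N : Ω → ℕ}
    (hN : Measurable N) {F : ℕ → Ω → β} (hF : ∀ j, Measurable (F j)) :
    Measurable fun ω => F (N ω) ω :=
  (measurable_from_prod_countable_left (f := fun p : Ω × ℕ => F p.2 p.1) hF).comp
    (measurable_id.prodMk hN)

theorem lintegral_mul_sum_Icc_of_indepFun {N : Ω → ℕ} (hN : Measurable N)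
    {X : ℕ → Ω → ℝ≥0∞} (hX : ∀ i, Measurable (X i)) (hind : IndepFun N (fun ω i => X i ω) μ)
    {c : ℝ≥0∞} (hc : ∀ i, ∫⁻ ω, X i ω ∂μ = c) (g : ℕ → ℝ≥0∞) :
    ∫⁻ ω, g (N ω) * ∑ i ∈ Icc 1 (N ω), X i ω ∂μ = (∫⁻ ω, g (N ω) * N ω ∂μ) * c := by
  set G : ℕ → ℕ → ℝ≥0∞ := fun i j => if i ∈ Icc 1 j then g j else 0
  have hGm : ∀ i, Measurable fun ω => G i (N ω) := fun i =>
    (Measurable.of_discrete (f := G i)).comp hN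
  have hsum : ∀ (j : ℕ) (y : ℕ → ℝ≥0∞), g j * ∑ i ∈ Icc 1 j, y i = ∑' i, G i j * y i := by
    intro j y
    rw [tsum_eq_sum (s := Icc 1 j) fun i hi => by simp only [G, if_neg hi, zero_mul], mul_sum]
    exact sum_congr rfl fun i hi => by simp only [G, if_pos hi]
  have hterm : ∀ i, ∫⁻ ω, G i (N ω) * X i ω ∂μ = (∫⁻ ω, G i (N ω) ∂μ) * c := fun i => by
    rw [← hc i]
    exact lintegral_mul_eq_lintegral_mul_lintegral_of_indepFun'' (hGm i).aemeasurable
      (hX i).aemeasurable (hind.comp (Measurable.of_discrete (f := G i)) (measurable_pi_apply i))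
  calc ∫⁻ ω, g (N ω) * ∑ i ∈ Icc 1 (N ω), X i ω ∂μ
      = ∑' i, ∫⁻ ω, G i (N ω) * X i ω ∂μ := by
        simp_rw [hsum]
        exact lintegral_tsum fun i => ((hGm i).mul (hX i)).aemeasurable
    _ = (∫⁻ ω, ∑' i, G i (N ω) ∂μ) * c := by
        rw [lintegral_tsum fun i => (hGm i).aemeasurable, ← ENNReal.tsum_mul_right]
        exact tsum_congr hterm
    _ = (∫⁻ ω, g (N ω) * N ω ∂μ) * c := by
        congr 2 with ω
        simpa using (hsum (N ω) 1).symm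

theorem integrable_inv_natCast_pow [IsFiniteMeasure μ] {N : Ω → ℕ} (hN : Measurable N) (m : ℕ) :
    Integrable (fun ω => ((N ω : ℝ) ^ m)⁻¹) μ := by
  refine .of_bound ((Measurable.of_discrete (f := fun n : ℕ => ((n : ℝ) ^ m)⁻¹)).comp
    hN).aestronglyMeasurable 1 (ae_of_all _ fun ω => ?_)
  rw [Real.norm_of_nonneg (by positivity)]
  exact_mod_cast Nat.cast_inv_le_one (α := ℝ) (N ω ^ m)

theorem integral_inv_natCast_pow_lt_one [IsProbabilityMeasure μ] {N : Ω → ℕ}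
    (hN : Measurable N) (hN1 : ∀ ω, 1 ≤ N ω) (hN2 : 0 < μ {ω | 2 ≤ N ω}) {m : ℕ} (hm : m ≠ 0) :
    ∫ ω, ((N ω : ℝ) ^ m)⁻¹ ∂μ < 1 := by
  have hle : ∀ ω, ENNReal.ofReal ((N ω : ℝ) ^ m)⁻¹ ≤ 1 := fun ω =>
    ENNReal.ofReal_le_one.2 (inv_le_one_of_one_le₀ (one_le_pow₀ (by exact_mod_cast hN1 ω)))
  rw [← ENNReal.ofReal_lt_one, ofReal_integral_eq_lintegral_ofReal
    (integrable_inv_natCast_pow hN m) (ae_of_all _ fun ω => by positivity)]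
  calc ∫⁻ ω, ENNReal.ofReal ((N ω : ℝ) ^ m)⁻¹ ∂μ < ∫⁻ _, 1 ∂μ := by
        refine lintegral_strict_mono_of_ae_le_of_ae_lt_on aemeasurable_const
          ((lintegral_mono hle).trans_lt (by simp)).ne (ae_of_all _ hle) hN2.ne'
          (ae_of_all _ fun ω (hω : 2 ≤ N ω) => ?_)
        rw [ENNReal.ofReal_lt_one]
        exact inv_lt_one_of_one_lt₀ (one_lt_pow₀ (by exact_mod_cast hω) hm)
    _ = 1 := by simp

theorem integrable_of_lintegral_ofReal_lt_top {f : Ω → ℝ} (hf : AEStronglyMeasurable f μ)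
    (h0 : 0 ≤ᵐ[μ] f) (h : ∫⁻ ω, ENNReal.ofReal (f ω) ∂μ < ∞) : Integrable f μ :=
  ⟨hf, (hasFiniteIntegral_iff_ofReal h0).2 h⟩

theorem lintegral_ofReal_pow_le_ofReal_integral_pow {X Y : Ω → ℝ} (hX : 0 ≤ᵐ[μ] X)
    (hXY : X ≤ᵐ[μ] Y) {k : ℕ} (hY : Integrable (fun ω => Y ω ^ k) μ) :
    ∫⁻ ω, ENNReal.ofReal (X ω ^ k) ∂μ ≤ ENNReal.ofReal (∫ ω, Y ω ^ k ∂μ) := by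
  rw [ofReal_integral_eq_lintegral_ofReal hY
    ((hX.and hXY).mono fun _ h => pow_nonneg (h.1.trans h.2) k)]
  exact lintegral_mono_ae <| (hX.and hXY).mono fun _ h =>
    ENNReal.ofReal_le_ofReal (pow_le_pow_left₀ h.1 h.2 k)

theorem ae_le_of_ae_le_succ_of_tendsto {f : ℕ → Ω → ℝ} {F : Ω → ℝ}
    (hmono : ∀ n, ∀ᵐ ω ∂μ, f n ω ≤ f (n + 1) ω)
    (hlim : ∀ᵐ ω ∂μ, Tendsto (fun n => f n ω) atTop (𝓝 (F ω))) (n : ℕ) :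
    ∀ᵐ ω ∂μ, f n ω ≤ F ω := by
  filter_upwards [ae_all_iff.2 hmono, hlim] with ω hmono hlim
  exact (monotone_nat_of_le_succ hmono).ge_of_tendsto hlim n

theorem lintegral_le_of_tendsto_of_forall_le {f : ℕ → Ω → ℝ≥0∞} {F : Ω → ℝ≥0∞} {C : ℝ≥0∞}
    (hf : ∀ n, Measurable (f n)) (hlim : ∀ᵐ ω ∂μ, Tendsto (fun n => f n ω) atTop (𝓝 (F ω)))
    (hC : ∀ n, ∫⁻ ω, f n ω ∂μ ≤ C) : ∫⁻ ω, F ω ∂μ ≤ C :=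
  calc ∫⁻ ω, F ω ∂μ = ∫⁻ ω, liminf (fun n => f n ω) atTop ∂μ :=
        lintegral_congr_ae (hlim.mono fun _ h => h.liminf_eq.symm)
    _ ≤ liminf (fun n => ∫⁻ ω, f n ω ∂μ) atTop := lintegral_liminf_le hf
    _ ≤ C := liminf_le_of_frequently_le' (Frequently.of_forall hC)

theorem measurable_resistanceMap {δ : ℝ} {N : Ω → ℕ} (hNm : Measurable N) {S : ℕ → Ω → ℝ}
    (hSm : ∀ i, Measurable (S i)) : Measurable fun ω => resistanceMap δ (N ω) fun i => S i ω :=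
  measurable_apply_random_index hNm (F := fun j ω => resistanceMap δ j fun i => S i ω) fun _ =>
    measurable_const.add (measurable_const.mul (Finset.measurable_sum _ fun i _ => hSm i))

theorem lintegral_inv_pow_mul_sum_Icc_eq [IsFiniteMeasure μ] {N : Ω → ℕ} (hNm : Measurable N)
    (hN : ∀ ω, 1 ≤ N ω) {S : ℕ → Ω → ℝ} (hSm : ∀ i, Measurable (S i)) {Y : Ω → ℝ}
    (hSY : ∀ i, IdentDistrib (S i) Y μ μ) (hSN : IndepFun N (fun ω i => S i ω) μ) (m k : ℕ) :
    ∫⁻ ω, ENNReal.ofReal (((N ω : ℝ) ^ (m + 1))⁻¹)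
        * ∑ i ∈ Icc 1 (N ω), ENNReal.ofReal (S i ω ^ k) ∂μ
      = ENNReal.ofReal (∫ ω, ((N ω : ℝ) ^ m)⁻¹ ∂μ) * ∫⁻ ω, ENNReal.ofReal (Y ω ^ k) ∂μ := by
  have hq : ∫⁻ ω, ENNReal.ofReal (((N ω : ℝ) ^ (m + 1))⁻¹) * N ω ∂μ
      = ENNReal.ofReal (∫ ω, ((N ω : ℝ) ^ m)⁻¹ ∂μ) := by
    rw [ofReal_integral_eq_lintegral_ofReal (integrable_inv_natCast_pow hNm m)
      (ae_of_all _ fun ω => by positivity)]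
    refine lintegral_congr fun ω => ?_
    have hN0 : (N ω : ℝ) ≠ 0 := by have := hN ω; positivity
    rw [← ENNReal.ofReal_natCast, ← ENNReal.ofReal_mul (by positivity), pow_succ, mul_inv,
      inv_mul_cancel_right₀ hN0]
  rw [← hq]
  exact lintegral_mul_sum_Icc_of_indepFun hNm (fun i => ((hSm i).pow_const k).ennreal_ofReal)
    (by exact hSN.comp measurable_id (measurable_pi_lambda
      (fun (v : ℕ → ℝ) i => ENNReal.ofReal (v i ^ k)) fun i =>
        ((measurable_pi_apply i).pow_const k).ennreal_ofReal))
    (c := ∫⁻ ω, ENNReal.ofReal (Y ω ^ k) ∂μ)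
    (fun i => ((hSY i).comp (measurable_id.pow_const k).ennreal_ofReal).lintegral_eq)
    fun j => ENNReal.ofReal (((j : ℝ) ^ (m + 1))⁻¹)

theorem lintegral_ofReal_resistanceMap_pow_le [IsFiniteMeasure μ] {δ : ℝ} (hδ : 0 < δ)
    {N : Ω → ℕ} (hNm : Measurable N) (hN : ∀ ω, 1 ≤ N ω) {S : ℕ → Ω → ℝ}
    (hSm : ∀ i, Measurable (S i)) (hS : ∀ᵐ ω ∂μ, ∀ i, 0 ≤ S i ω) {Y : Ω → ℝ}
    (hSY : ∀ i, IdentDistrib (S i) Y μ μ) (hSN : IndepFun N (fun ω i => S i ω) μ) (m : ℕ) :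
    ∫⁻ ω, ENNReal.ofReal ((resistanceMap δ (N ω) fun i => S i ω) ^ m) ∂μ
      ≤ ∑ k ∈ range (m + 1), ENNReal.ofReal ((m.choose k : ℝ) * δ ^ ((k : ℤ) - m)
          * ∫ ω, ((N ω : ℝ) ^ m)⁻¹ ∂μ) * ∫⁻ ω, ENNReal.ofReal (Y ω ^ k) ∂μ := by
  set c : ℕ → ℝ := fun k => (m.choose k : ℝ) * δ ^ ((k : ℤ) - m)
  have hc : ∀ k, 0 ≤ c k := fun k => by positivity
  have hSk : ∀ k i, Measurable fun ω => ENNReal.ofReal (S i ω ^ k) :=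
    fun k i => ((hSm i).pow_const k).ennreal_ofReal
  calc ∫⁻ ω, ENNReal.ofReal ((resistanceMap δ (N ω) fun i => S i ω) ^ m) ∂μ
      ≤ ∫⁻ ω, ∑ k ∈ range (m + 1), ENNReal.ofReal (c k)
          * (ENNReal.ofReal (((N ω : ℝ) ^ (m + 1))⁻¹)
            * ∑ i ∈ Icc 1 (N ω), ENNReal.ofReal (S i ω ^ k)) ∂μ := by
        refine lintegral_mono_ae (hS.mono fun ω hω => ?_)
        have hSk0 : ∀ k, 0 ≤ ∑ i ∈ Icc 1 (N ω), S i ω ^ k := fun k =>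
          sum_nonneg fun i _ => pow_nonneg (hω i) k
        refine (ENNReal.ofReal_le_ofReal
          (resistanceMap_pow_le hδ (hN ω) (fun i _ => hω i) m)).trans_eq ?_
        rw [ENNReal.ofReal_sum_of_nonneg fun k _ =>
          mul_nonneg (hc k) (by have := hSk0 k; positivity)]
        refine sum_congr rfl fun k _ => ?_
        rw [ENNReal.ofReal_mul (hc k)]
        congr 1
        rw [ENNReal.ofReal_mul (by positivity),
          ENNReal.ofReal_sum_of_nonneg fun i _ => pow_nonneg (hω i) k]
    _ = _ := by
        refine (lintegral_finsetSum _ fun k _ => Measurable.const_mul ?_ _).trans ?_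
        · exact ((Measurable.of_discrete
            (f := fun j : ℕ => ENNReal.ofReal (((j : ℝ) ^ (m + 1))⁻¹))).comp hNm).mul
              (measurable_apply_random_index hNm fun j =>
                Finset.measurable_sum _ fun i _ => hSk k i)
        refine sum_congr rfl fun k _ => ?_
        rw [lintegral_const_mul' _ _ ENNReal.ofReal_ne_top,
          lintegral_inv_pow_mul_sum_Icc_eq hNm hN hSm hSY hSN, ENNReal.ofReal_mul (hc k),
          mul_assoc]

theorem lintegral_ofReal_pow_le_of_stochDominated_resistanceMap [IsFiniteMeasure μ]
    {δ : ℝ} (hδ : 0 < δ) {N : Ω → ℕ} (hNm : Measurable N) (hN : ∀ ω, 1 ≤ N ω)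
    {S : ℕ → Ω → ℝ} (hSm : ∀ i, Measurable (S i)) {X Y : Ω → ℝ} (hXm : Measurable X)
    (hX : 0 ≤ᵐ[μ] X) (hY : 0 ≤ᵐ[μ] Y) (hSY : ∀ i, IdentDistrib (S i) Y μ μ)
    (hSN : IndepFun N (fun ω i => S i ω) μ)
    (hdom : StochDominated μ X fun ω => resistanceMap δ (N ω) fun i => S i ω) (m : ℕ) :
    ∫⁻ ω, ENNReal.ofReal (X ω ^ m) ∂μ
      ≤ ∑ k ∈ range m, ENNReal.ofReal ((m.choose k : ℝ) * δ ^ ((k : ℤ) - m)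
            * ∫ ω, ((N ω : ℝ) ^ m)⁻¹ ∂μ) * ∫⁻ ω, ENNReal.ofReal (Y ω ^ k) ∂μ
        + ENNReal.ofReal (∫ ω, ((N ω : ℝ) ^ m)⁻¹ ∂μ) * ∫⁻ ω, ENNReal.ofReal (Y ω ^ m) ∂μ := by
  have hS : ∀ᵐ ω ∂μ, ∀ i, 0 ≤ S i ω :=
    ae_all_iff.2 fun i => (hSY i).symm.ae_mem_snd measurableSet_Ici (hY.mono fun _ h => h)
  calc ∫⁻ ω, ENNReal.ofReal (X ω ^ m) ∂μ
      ≤ ∫⁻ ω, ENNReal.ofReal ((resistanceMap δ (N ω) fun i => S i ω) ^ m) ∂μ :=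
        hdom.lintegral_ofReal_pow_le hXm.aemeasurable
          (measurable_resistanceMap hNm hSm).aemeasurable hX
          (hS.mono fun ω h => resistanceMap_nonneg hδ.le fun i _ => h i) m
    _ ≤ _ := lintegral_ofReal_resistanceMap_pow_le hδ hNm hN hSm hS hSY hSN m
    _ = _ := by
        rw [sum_range_succ]
        simp

end

theorem finite_moments_of_resistance_recursion_general
    {Ω : Type*} [MeasurableSpace Ω] (P : Measure Ω) [IsProbabilityMeasure P]
    (δ : ℝ) (hδ : 0 < δ)
    (N : Ω → ℕ) (hNmeas : Measurable N) (hN : ∀ ω, 1 ≤ N ω)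
    (hN2 : 0 < P {ω | 2 ≤ N ω})
    (R : ℕ → Ω → ℝ) (hRmeas : ∀ n, Measurable (R n))
    (hR0nonneg : ∀ n ω, 0 ≤ R n ω)
    (hRzero : ∀ ω, R 0 ω = 0)
    (hRmono : ∀ n, ∀ᵐ ω ∂P, R n ω ≤ R (n + 1) ω)
    (Rinf : Ω → ℝ) (hRinfmeas : Measurable Rinf)
    (hRlim : ∀ᵐ ω ∂P, Filter.Tendsto (fun n => R n ω) Filter.atTop (nhds (Rinf ω)))
    (S : ℕ → ℕ → Ω → ℝ) (hSmeas : ∀ n i, Measurable (S n i))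
    (hSident : ∀ n i, IdentDistrib (S n i) (R n) P P)
    (hSN : ∀ n, IndepFun N (fun ω i => S n i ω) P)
    (hdom : ∀ n, ∀ t : ℝ, 0 ≤ t →
      P {ω | t < R (n + 1) ω}
        ≤ P {ω | t < (δ * (N ω : ℝ))⁻¹
              + ((N ω : ℝ) ^ 2)⁻¹ * ∑ i ∈ Finset.Icc 1 (N ω), S n i ω}) :
    ∀ m : ℕ, 1 ≤ m →
      (∫⁻ ω, ENNReal.ofReal (Rinf ω ^ m) ∂P < ⊤) ∧
      ∀ n, ∫⁻ ω, ENNReal.ofReal (R n ω ^ m) ∂P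
        ≤ ENNReal.ofReal
            ((∑ k ∈ Finset.range m,
                (m.choose k : ℝ) * δ ^ ((k : ℤ) - (m : ℤ))
                  * (∫ ω, ((N ω : ℝ) ^ m)⁻¹ ∂P) * ∫ ω, Rinf ω ^ k ∂P)
              / (1 - ∫ ω, ((N ω : ℝ) ^ m)⁻¹ ∂P)) := by
  have hRle := ae_le_of_ae_le_succ_of_tendsto hRmono hRlim
  have hRinf : 0 ≤ᵐ[P] Rinf := (hRle 0).mono fun ω h => by rwa [hRzero] at h
  have hRinf_pow : ∀ k, 0 ≤ᵐ[P] fun ω => Rinf ω ^ k := fun k => hRinf.mono fun ω h => pow_nonneg h k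
  intro m
  induction m using Nat.strong_induction_on with | _ m IH => ?_
  intro hm
  have hint : ∀ k < m, Integrable (fun ω => Rinf ω ^ k) P := fun k hk => by
    rcases k.eq_zero_or_pos with rfl | hk0
    · simp
    exact integrable_of_lintegral_ofReal_lt_top (hRinfmeas.pow_const k).aestronglyMeasurable
      (hRinf_pow k) (IH k hk hk0).1
  set q := ∫ ω, ((N ω : ℝ) ^ m)⁻¹ ∂P
  set b := ∑ k ∈ Finset.range m,
    (m.choose k : ℝ) * δ ^ ((k : ℤ) - (m : ℤ)) * q * ∫ ω, Rinf ω ^ k ∂P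
  have hq1 : q < 1 := integral_inv_natCast_pow_lt_one hNmeas hN hN2 (by omega)
  have hstep : ∀ n, ∫⁻ ω, ENNReal.ofReal (R (n + 1) ω ^ m) ∂P
      ≤ ENNReal.ofReal b + ENNReal.ofReal q * ∫⁻ ω, ENNReal.ofReal (R n ω ^ m) ∂P := fun n =>
    (lintegral_ofReal_pow_le_of_stochDominated_resistanceMap hδ hNmeas hN (hSmeas n)
      (hRmeas (n + 1)) (ae_of_all _ (hR0nonneg _)) (ae_of_all _ (hR0nonneg n)) (hSident n)
      (hSN n) (hdom n) m).trans <| add_le_add (ENNReal.sum_ofReal_mul_le_ofReal_sum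
        (fun k _ => by positivity) (fun k _ => integral_nonneg_of_ae (hRinf_pow k))
        fun k hk => lintegral_ofReal_pow_le_ofReal_integral_pow (ae_of_all _ (hR0nonneg n))
          (hRle n) (hint k (Finset.mem_range.1 hk))) le_rfl
  have hbound : ∀ n, ∫⁻ ω, ENNReal.ofReal (R n ω ^ m) ∂P ≤ ENNReal.ofReal (b / (1 - q)) := by
    rw [ENNReal.ofReal_div_of_pos (sub_pos.2 hq1),
      ENNReal.ofReal_sub _ (integral_nonneg fun ω => by positivity), ENNReal.ofReal_one]
    exact ENNReal.le_div_of_le_add_mul (ENNReal.ofReal_lt_one.2 hq1)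
      (by simp [hRzero, zero_pow (by omega : m ≠ 0)]) hstep
  refine ⟨(lintegral_le_of_tendsto_of_forall_le (fun n => ((hRmeas n).pow_const m).ennreal_ofReal)
    ?_ hbound).trans_lt ENNReal.ofReal_lt_top, hbound⟩
  filter_upwards [hRlim] with ω h
  exact (ENNReal.continuous_ofReal.tendsto _).comp (h.pow m)

/-- **Finite moments of the limit of a resistance-type recursion.**
Let `δ > 0` and let `N` be a random variable with values in `{1, 2, …}` with
`P(N ≥ 2) > 0`. Let `(Rₙ)` be nonnegative random variables with `R₀ = 0`, increasing
almost surely to a limit `R_∞`, such that each `R_{n+1}` is stochastically dominated by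
`(δN)⁻¹ + N⁻² ∑_{i=1}^N Rₙ⁽ⁱ⁾`, where the `Rₙ⁽ⁱ⁾` are i.i.d. copies of `Rₙ`
independent of `N`. Then `E[R_∞^m] < ∞` for every `m ≥ 1`, and moreover
`sup_n E[Rₙ^m] ≤ (∑_{k=0}^{m−1} binom(m,k) δ^(k−m) E[N^(−m)] E[R_∞^k]) / (1 − E[N^(−m)])`. -/
theorem finite_moments_of_resistance_recursion
    {Ω : Type*} [MeasurableSpace Ω] (P : Measure Ω) [IsProbabilityMeasure P]
    (δ : ℝ) (hδ : 0 < δ)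
    (N : Ω → ℕ) (hNmeas : Measurable N) (hN : ∀ ω, 1 ≤ N ω)
    (hN2 : 0 < P {ω | 2 ≤ N ω})
    (R : ℕ → Ω → ℝ) (hRmeas : ∀ n, Measurable (R n))
    (hR0nonneg : ∀ n ω, 0 ≤ R n ω)
    (hRzero : ∀ ω, R 0 ω = 0)
    (hRmono : ∀ n, ∀ᵐ ω ∂P, R n ω ≤ R (n + 1) ω)
    (Rinf : Ω → ℝ) (hRinfmeas : Measurable Rinf)
    (hRlim : ∀ᵐ ω ∂P, Filter.Tendsto (fun n => R n ω) Filter.atTop (nhds (Rinf ω)))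
    (S : ℕ → ℕ → Ω → ℝ) (hSmeas : ∀ n i, Measurable (S n i))
    (hSident : ∀ n i, IdentDistrib (S n i) (R n) P P)
    (hSindep : ∀ n, iIndepFun (S n) P)
    (hSN : ∀ n, IndepFun N (fun ω i => S n i ω) P)
    (hdom : ∀ n, ∀ t : ℝ, 0 ≤ t →
      P {ω | t < R (n + 1) ω}
        ≤ P {ω | t < (δ * (N ω : ℝ))⁻¹
              + ((N ω : ℝ) ^ 2)⁻¹ * ∑ i ∈ Finset.Icc 1 (N ω), S n i ω}) :
    ∀ m : ℕ, 1 ≤ m →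
      (∫⁻ ω, ENNReal.ofReal (Rinf ω ^ m) ∂P < ⊤) ∧
      ∀ n, ∫⁻ ω, ENNReal.ofReal (R n ω ^ m) ∂P
        ≤ ENNReal.ofReal
            ((∑ k ∈ Finset.range m,
                (m.choose k : ℝ) * δ ^ ((k : ℤ) - (m : ℤ))
                  * (∫ ω, ((N ω : ℝ) ^ m)⁻¹ ∂P) * ∫ ω, Rinf ω ^ k ∂P)
              / (1 - ∫ ω, ((N ω : ℝ) ^ m)⁻¹ ∂P)) :=
  finite_moments_of_resistance_recursion_general P δ hδ N hNmeas hN hN2 R hRmeas hR0nonneg hRzero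
    hRmono Rinf hRinfmeas hRlim S hSmeas hSident hSN hdom
end
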